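/- arXiv:2501.15943 — 3 statements merged into one kernel-verified Lean document; each statement's English description precedes it below -/
import Mathlib

section
/- Let A, B be real N×N matrices such that B + Bᵀ is positive definite, with b := λ_min((B+Bᵀ)/2) > 0, and let F : [0,∞) → ℝ^N be a measurable function with ‖F‖_∞ := sup_{ω ≥ 0} ‖F(ω)‖ < ∞. Fix t > 0 and z > 0, and define J₁(R) := ∫_R^∞ exp((A − ω²B)t) F(ω) cos(ωz) dω for R > 0. Then ‖J₁(R)‖ ≤ (‖F‖_∞ / √(bt)) · e^{μ(A)t} · ∫_{R√(bt)}^∞ e^{−u²} du, which equals (√π ‖F‖_∞ / (2√(bt))) · e^{μ(A)t} · erfc(R√(bt)). -/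
open MeasureTheory Filter Matrix NormedSpace

/-- The largest eigenvalue of a real symmetric matrix (junk value `0` otherwise). -/
noncomputable def lambdaMax {N : ℕ} (S : Matrix (Fin N) (Fin N) ℝ) : ℝ :=
  if h : S.IsHermitian then ⨆ i, h.eigenvalues i else 0

/-- The smallest eigenvalue of a real symmetric matrix (junk value `0` otherwise). -/
noncomputable def lambdaMin {N : ℕ} (S : Matrix (Fin N) (Fin N) ℝ) : ℝ :=
  if h : S.IsHermitian then ⨅ i, h.eigenvalues i else 0

/-- The logarithmic norm `μ(P) = λ_max((P + Pᵀ)/2)` of a real square matrix. -/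
noncomputable def logNorm {N : ℕ} (P : Matrix (Fin N) (Fin N) ℝ) : ℝ :=
  lambdaMax ((1 / 2 : ℝ) • (P + Pᵀ))

/-- The action of a real `N × N` matrix on the Euclidean space `ℝ^N`. -/
noncomputable def matAct {N : ℕ} (M : Matrix (Fin N) (Fin N) ℝ)
    (v : EuclideanSpace ℝ (Fin N)) : EuclideanSpace ℝ (Fin N) :=
  Matrix.toEuclideanLin M v

/-- The operator norm of a real `N × N` matrix, induced by the Euclidean norm on `ℝ^N`. -/
noncomputable def matOpNorm {N : ℕ} (M : Matrix (Fin N) (Fin N) ℝ) : ℝ :=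
  ‖LinearMap.toContinuousLinearMap (Matrix.toEuclideanLin M)‖

/-- The complementary error function `erfc x = (2/√π) ∫_x^∞ e^{-u²} du`. -/
noncomputable def erfc (x : ℝ) : ℝ :=
  (2 / Real.sqrt Real.pi) * ∫ u in Set.Ioi x, Real.exp (-u ^ 2)

open scoped RealInnerProductSpace
open scoped Matrix.Norms.L2Operator

section Aux

variable {N : ℕ}

lemma inner_matAct_eq_sum {S : Matrix (Fin N) (Fin N) ℝ} (hS : S.IsHermitian)
    (v : EuclideanSpace ℝ (Fin N)) :
    ⟪matAct S v, v⟫ = ∑ i, hS.eigenvalues i * ⟪hS.eigenvectorBasis i, v⟫ ^ 2 := by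
  have hsym := Matrix.isHermitian_iff_isSymmetric.1 hS
  have hb : ∀ i, Matrix.toEuclideanLin S (hS.eigenvectorBasis i)
      = hS.eigenvalues i • hS.eigenvectorBasis i := by
    intro i
    have h := hS.mulVec_eigenvectorBasis i
    ext j
    simpa [Matrix.toEuclideanLin_apply] using congrFun h j
  rw [← hS.eigenvectorBasis.sum_inner_mul_inner (matAct S v) v]
  refine Finset.sum_congr rfl fun i _ => ?_
  have h1 : ⟪matAct S v, hS.eigenvectorBasis i⟫
      = hS.eigenvalues i * ⟪hS.eigenvectorBasis i, v⟫ := by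
    have h2 := hsym v (hS.eigenvectorBasis i)
    rw [show matAct S v = Matrix.toEuclideanLin S v from rfl, h2, hb i,
      real_inner_smul_right, real_inner_comm]
  rw [h1]; ring

lemma norm_sq_eq_sum_inner {S : Matrix (Fin N) (Fin N) ℝ} (hS : S.IsHermitian)
    (v : EuclideanSpace ℝ (Fin N)) :
    ‖v‖ ^ 2 = ∑ i, ⟪hS.eigenvectorBasis i, v⟫ ^ 2 := by
  rw [← real_inner_self_eq_norm_sq, ← hS.eigenvectorBasis.sum_inner_mul_inner v v]
  refine Finset.sum_congr rfl fun i _ => ?_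
  rw [real_inner_comm v (hS.eigenvectorBasis i)]; ring

lemma inner_matAct_le_lambdaMax {S : Matrix (Fin N) (Fin N) ℝ} (hS : S.IsHermitian)
    (v : EuclideanSpace ℝ (Fin N)) :
    ⟪matAct S v, v⟫ ≤ lambdaMax S * ‖v‖ ^ 2 := by
  rw [lambdaMax, dif_pos hS, inner_matAct_eq_sum hS v, norm_sq_eq_sum_inner hS v,
    Finset.mul_sum]
  refine Finset.sum_le_sum fun i _ => ?_
  exact mul_le_mul_of_nonneg_right (le_ciSup (Set.Finite.bddAbove (Set.finite_range _)) i)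
    (sq_nonneg _)

lemma lambdaMin_le_inner_matAct {S : Matrix (Fin N) (Fin N) ℝ} (hS : S.IsHermitian)
    (v : EuclideanSpace ℝ (Fin N)) :
    lambdaMin S * ‖v‖ ^ 2 ≤ ⟪matAct S v, v⟫ := by
  rw [lambdaMin, dif_pos hS, inner_matAct_eq_sum hS v, norm_sq_eq_sum_inner hS v,
    Finset.mul_sum]
  refine Finset.sum_le_sum fun i _ => ?_
  exact mul_le_mul_of_nonneg_right (ciInf_le (Set.Finite.bddBelow (Set.finite_range _)) i)
    (sq_nonneg _)

lemma symmPart_isHermitian (P : Matrix (Fin N) (Fin N) ℝ) :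
    ((1 / 2 : ℝ) • (P + Pᵀ)).IsHermitian := by
  unfold Matrix.IsHermitian
  ext i j
  simp [Matrix.conjTranspose_apply, Matrix.transpose_apply, Matrix.smul_apply,
    Matrix.add_apply]
  ring

lemma inner_matAct_symmPart (P : Matrix (Fin N) (Fin N) ℝ) (v : EuclideanSpace ℝ (Fin N)) :
    ⟪matAct P v, v⟫ = ⟪matAct ((1 / 2 : ℝ) • (P + Pᵀ)) v, v⟫ := by
  have htrans : ⟪matAct Pᵀ v, v⟫ = ⟪matAct P v, v⟫ := by
    simp only [matAct, Matrix.toEuclideanLin_apply, PiLp.inner_apply, RCLike.inner_apply,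
      conj_trivial, Matrix.mulVec, dotProduct, Matrix.transpose_apply,
      Finset.mul_sum]
    rw [Finset.sum_comm]
    refine Finset.sum_congr rfl fun i _ => Finset.sum_congr rfl fun j _ => ?_
    have hv : ∀ k, (WithLp.equiv 2 (Fin N → ℝ)) v k = v k := fun k => rfl
    ring
  have hlin : matAct ((1 / 2 : ℝ) • (P + Pᵀ)) v
      = (1 / 2 : ℝ) • (matAct P v + matAct Pᵀ v) := by
    rw [matAct, matAct, matAct, _root_.map_smul, map_add, LinearMap.smul_apply,
      LinearMap.add_apply]
  rw [hlin, real_inner_smul_left, inner_add_left, htrans]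
  ring

lemma matAct_eq_clm (M : Matrix (Fin N) (Fin N) ℝ) (v : EuclideanSpace ℝ (Fin N)) :
    matAct M v = Matrix.toEuclideanCLM (𝕜 := ℝ) M v := by
  rw [matAct, ← Matrix.coe_toEuclideanCLM_eq_toEuclideanLin]
  rfl

set_option maxHeartbeats 2000000 in
/-- Log-norm bound for the matrix exponential, via Grönwall. -/
lemma norm_exp_matAct_le (P : Matrix (Fin N) (Fin N) ℝ) (c : ℝ)
    (hq : ∀ w : EuclideanSpace ℝ (Fin N), ⟪matAct P w, w⟫ ≤ c * ‖w‖ ^ 2)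
    {t : ℝ} (ht : 0 ≤ t) (v : EuclideanSpace ℝ (Fin N)) :
    ‖matAct (NormedSpace.exp (t • P)) v‖ ≤ Real.exp (c * t) * ‖v‖ := by
  set T : EuclideanSpace ℝ (Fin N) →L[ℝ] EuclideanSpace ℝ (Fin N) :=
    Matrix.toEuclideanCLM (𝕜 := ℝ) P with hT
  have hcont : Continuous (⇑(Matrix.toEuclideanCLM (𝕜 := ℝ) (n := Fin N))) := by
    have : (⇑(Matrix.toEuclideanCLM (𝕜 := ℝ) (n := Fin N)) :
        Matrix (Fin N) (Fin N) ℝ → (EuclideanSpace ℝ (Fin N) →L[ℝ] EuclideanSpace ℝ (Fin N)))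
        = fun M => LinearMap.toContinuousLinearMap (Matrix.toEuclideanLin M) := by
      funext M; ext1 x; rfl
    rw [this]
    exact LinearMap.continuous_of_finiteDimensional
      ((LinearMap.toContinuousLinearMap.toLinearMap :
        _ →ₗ[ℝ] (EuclideanSpace ℝ (Fin N) →L[ℝ] EuclideanSpace ℝ (Fin N))).comp
        (Matrix.toEuclideanLin.toLinearMap))
  have hexp : Matrix.toEuclideanCLM (𝕜 := ℝ) (NormedSpace.exp (t • P)) = NormedSpace.exp (t • T) := by
    rw [map_exp_of_mem_ball (𝕂 := ℝ) _ hcont (t • P)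
      ((expSeries_radius_eq_top ℝ (Matrix (Fin N) (Fin N) ℝ)).symm ▸ edist_lt_top _ _)]
    congr 1
    apply ContinuousLinearMap.ext
    intro x
    rw [ContinuousLinearMap.smul_apply, ← matAct_eq_clm, ← matAct_eq_clm, matAct, matAct,
      _root_.map_smul, LinearMap.smul_apply]
  set ψ : ℝ → EuclideanSpace ℝ (Fin N) := fun s => NormedSpace.exp (s • T) v with hψdef
  have hψ : ∀ s : ℝ, HasDerivAt ψ (T (ψ s)) s := by
    intro s
    have h1 := hasDerivAt_exp_smul_const' (𝕂 := ℝ) T s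
    have h2 := h1.clm_apply (hasDerivAt_const s v)
    simpa using h2
  set f : ℝ → ℝ := fun s => ⟪ψ s, ψ s⟫ with hfdef
  set g : ℝ → ℝ := fun s => Real.exp (-(2 * c) * s) * f s with hgdef
  have hf : ∀ s : ℝ, HasDerivAt f (⟪ψ s, T (ψ s)⟫ + ⟪T (ψ s), ψ s⟫) s :=
    fun s => HasDerivAt.inner ℝ (hψ s) (hψ s)
  have hg : ∀ s : ℝ, HasDerivAt g
      (Real.exp (-(2 * c) * s) * (-(2 * c)) * f s
        + Real.exp (-(2 * c) * s) * (⟪ψ s, T (ψ s)⟫ + ⟪T (ψ s), ψ s⟫)) s := by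
    intro s
    have he : HasDerivAt (fun s : ℝ => Real.exp (-(2 * c) * s))
        (Real.exp (-(2 * c) * s) * (-(2 * c))) s := by
      simpa [mul_comm] using (((hasDerivAt_id s).const_mul (-(2 * c))).exp)
    exact he.mul (hf s)
  have hgle : ∀ s : ℝ, Real.exp (-(2 * c) * s) * (-(2 * c)) * f s
      + Real.exp (-(2 * c) * s) * (⟪ψ s, T (ψ s)⟫ + ⟪T (ψ s), ψ s⟫) ≤ 0 := by
    intro s
    have h1 : ⟪T (ψ s), ψ s⟫ ≤ c * ‖ψ s‖ ^ 2 := by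
      have := hq (ψ s)
      rwa [matAct_eq_clm] at this
    have h2 : ⟪ψ s, T (ψ s)⟫ = ⟪T (ψ s), ψ s⟫ := real_inner_comm _ _
    have h3 : f s = ‖ψ s‖ ^ 2 := real_inner_self_eq_norm_sq _
    have h4 : (0 : ℝ) < Real.exp (-(2 * c) * s) := Real.exp_pos _
    rw [h2, h3]
    nlinarith [h1, h4]
  have hant : AntitoneOn g (Set.Icc 0 t) := by
    have hdiff : Differentiable ℝ g := fun s => (hg s).differentiableAt
    refine antitoneOn_of_deriv_nonpos (convex_Icc 0 t) hdiff.continuous.continuousOn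
      (hdiff.differentiableOn) fun x _ => ?_
    rw [(hg x).deriv]
    exact hgle x
  have hkey : g t ≤ g 0 :=
    hant (Set.left_mem_Icc.2 ht) (Set.right_mem_Icc.2 ht) ht
  have hψ0 : ψ 0 = v := by
    show NormedSpace.exp ((0 : ℝ) • T) v = v
    have h0 : (0 : ℝ) • T = 0 := by ext x; simp
    rw [h0, exp_zero, ContinuousLinearMap.one_apply]
  have hg0 : g 0 = ‖v‖ ^ 2 := by
    have hf0 : f 0 = ‖v‖ ^ 2 := by
      show ⟪ψ 0, ψ 0⟫ = ‖v‖ ^ 2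
      rw [hψ0, real_inner_self_eq_norm_sq]
    show Real.exp (-(2 * c) * 0) * f 0 = ‖v‖ ^ 2
    rw [hf0]
    norm_num
  have hgt : g t = Real.exp (-(2 * c) * t) * ‖ψ t‖ ^ 2 := by
    have hft : f t = ‖ψ t‖ ^ 2 := by
      show ⟪ψ t, ψ t⟫ = ‖ψ t‖ ^ 2
      rw [real_inner_self_eq_norm_sq]
    show Real.exp (-(2 * c) * t) * f t = _
    rw [hft]
  rw [hgt, hg0] at hkey
  have hmul := mul_le_mul_of_nonneg_left hkey (Real.exp_pos (2 * c * t)).le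
  rw [← mul_assoc, ← Real.exp_add] at hmul
  have hsimp : 2 * c * t + -(2 * c) * t = 0 := by ring
  rw [hsimp, Real.exp_zero, one_mul] at hmul
  have heq : matAct (NormedSpace.exp (t • P)) v = ψ t := by
    rw [matAct_eq_clm, hexp]
  rw [heq]
  have hsq : ‖ψ t‖ ^ 2 ≤ (Real.exp (c * t) * ‖v‖) ^ 2 := by
    have : (Real.exp (c * t) * ‖v‖) ^ 2 = Real.exp (2 * c * t) * ‖v‖ ^ 2 := by
      rw [mul_pow, sq (Real.exp (c * t)), ← Real.exp_add]; ring_nf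
    rw [this]; exact hmul
  nlinarith [norm_nonneg (ψ t), Real.exp_pos (c * t), norm_nonneg v, hsq,
    mul_nonneg (Real.exp_pos (c * t)).le (norm_nonneg v)]

end Aux

theorem stmt2 {N : ℕ} (A B : Matrix (Fin N) (Fin N) ℝ)
    (hBpd : (B + Bᵀ).PosDef)
    (b : ℝ) (hb : b = lambdaMin ((1 / 2 : ℝ) • (B + Bᵀ))) (hbpos : 0 < b)
    (F : ℝ → EuclideanSpace ℝ (Fin N)) (hFmeas : Measurable F)
    (Fsup : ℝ) (hFsup : Fsup = ⨆ ω : Set.Ici (0 : ℝ), ‖F ω‖)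
    (hFbdd : BddAbove (Set.range fun ω : Set.Ici (0 : ℝ) => ‖F ω‖))
    (t z : ℝ) (ht : 0 < t) (hz : 0 < z) (R : ℝ) (hR : 0 < R) :
    ‖∫ ω in Set.Ioi R, Real.cos (ω * z) • matAct (NormedSpace.exp (t • (A - ω ^ 2 • B))) (F ω)‖
        ≤ Fsup / Real.sqrt (b * t) * Real.exp (logNorm A * t) *
            ∫ u in Set.Ioi (R * Real.sqrt (b * t)), Real.exp (-u ^ 2)
    ∧ Fsup / Real.sqrt (b * t) * Real.exp (logNorm A * t) *
            (∫ u in Set.Ioi (R * Real.sqrt (b * t)), Real.exp (-u ^ 2))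
        = Real.sqrt Real.pi * Fsup / (2 * Real.sqrt (b * t)) * Real.exp (logNorm A * t) *
            erfc (R * Real.sqrt (b * t)) := by
  have hbt : (0 : ℝ) < b * t := mul_pos hbpos ht
  set s := Real.sqrt (b * t) with hsdef
  have hs : 0 < s := Real.sqrt_pos.2 hbt
  have hs2 : s ^ 2 = b * t := Real.sq_sqrt hbt.le
  constructor
  · -- the inequality
    have hquad : ∀ ω : ℝ, ∀ w : EuclideanSpace ℝ (Fin N),
        ⟪matAct (A - ω ^ 2 • B) w, w⟫ ≤ (logNorm A - ω ^ 2 * b) * ‖w‖ ^ 2 := by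
      intro ω w
      have hlinA : matAct (A - ω ^ 2 • B) w = matAct A w - ω ^ 2 • matAct B w := by
        rw [matAct, matAct, matAct, map_sub, _root_.map_smul, LinearMap.sub_apply,
          LinearMap.smul_apply]
      have hA : ⟪matAct A w, w⟫ ≤ logNorm A * ‖w‖ ^ 2 := by
        rw [inner_matAct_symmPart A w]
        exact inner_matAct_le_lambdaMax (symmPart_isHermitian A) w
      have hBq : b * ‖w‖ ^ 2 ≤ ⟪matAct B w, w⟫ := by
        rw [inner_matAct_symmPart B w, hb]
        exact lambdaMin_le_inner_matAct (symmPart_isHermitian B) w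
      rw [hlinA, inner_sub_left, real_inner_smul_left]
      nlinarith [sq_nonneg ω, sq_nonneg ‖w‖, hA, hBq]
    have hbound : ∀ ω ∈ Set.Ioi R,
        ‖Real.cos (ω * z) • matAct (NormedSpace.exp (t • (A - ω ^ 2 • B))) (F ω)‖
          ≤ Fsup * Real.exp (logNorm A * t) * Real.exp (-(b * t) * ω ^ 2) := by
      intro ω hω
      have hω0 : (0 : ℝ) ≤ ω := le_of_lt (hR.trans hω)
      have hF : ‖F ω‖ ≤ Fsup := by
        rw [hFsup]
        exact le_ciSup hFbdd ⟨ω, hω0⟩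
      have hexp := norm_exp_matAct_le (A - ω ^ 2 • B) (logNorm A - ω ^ 2 * b)
        (hquad ω) ht.le (F ω)
      have hexp2 : Real.exp ((logNorm A - ω ^ 2 * b) * t)
          = Real.exp (logNorm A * t) * Real.exp (-(b * t) * ω ^ 2) := by
        rw [← Real.exp_add]; ring_nf
      calc ‖Real.cos (ω * z) • matAct (NormedSpace.exp (t • (A - ω ^ 2 • B))) (F ω)‖
          = |Real.cos (ω * z)| * ‖matAct (NormedSpace.exp (t • (A - ω ^ 2 • B))) (F ω)‖ := by
            rw [norm_smul, Real.norm_eq_abs]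
        _ ≤ 1 * ‖matAct (NormedSpace.exp (t • (A - ω ^ 2 • B))) (F ω)‖ :=
            mul_le_mul_of_nonneg_right (Real.abs_cos_le_one _) (norm_nonneg _)
        _ = ‖matAct (NormedSpace.exp (t • (A - ω ^ 2 • B))) (F ω)‖ := one_mul _
        _ ≤ Real.exp ((logNorm A - ω ^ 2 * b) * t) * ‖F ω‖ := hexp
        _ ≤ Real.exp ((logNorm A - ω ^ 2 * b) * t) * Fsup :=
            mul_le_mul_of_nonneg_left hF (Real.exp_pos _).le
        _ = Fsup * Real.exp (logNorm A * t) * Real.exp (-(b * t) * ω ^ 2) := by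
            rw [hexp2]; ring
    have hint : IntegrableOn
        (fun ω => Fsup * Real.exp (logNorm A * t) * Real.exp (-(b * t) * ω ^ 2))
        (Set.Ioi R) :=
      ((integrable_exp_neg_mul_sq hbt).integrableOn).const_mul _
    have key := norm_integral_le_of_norm_le hint
      ((ae_restrict_iff' measurableSet_Ioi).2 (ae_of_all _ hbound))
    refine key.trans (le_of_eq ?_)
    rw [MeasureTheory.integral_const_mul]
    have hsub : ∀ ω : ℝ, Real.exp (-(b * t) * ω ^ 2) = Real.exp (-(s * ω) ^ 2) := by
      intro ω
      congr 1
      rw [mul_pow, hs2]; ring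
    simp_rw [hsub]
    rw [integral_comp_mul_left_Ioi (fun u => Real.exp (-u ^ 2)) R hs, smul_eq_mul,
      mul_comm s R]
    field_simp
  · -- the equality
    rw [erfc]
    have hpi : Real.sqrt Real.pi ≠ 0 := ne_of_gt (Real.sqrt_pos.2 Real.pi_pos)
    field_simp
end

section
/- Let A, B be real N×N matrices such that B + Bᵀ is positive definite, with b := λ_min((B+Bᵀ)/2) > 0, and let g : [0,∞) → ℝ^N be continuous. Fix t > 0 and z > 0, and define J₂(R) := ∫_0^t ( ∫_R^∞ exp((A − ω²B)(t−s)) B g(s) cos(ωz) dω ) ds for R > 0. Then ‖J₂(R)‖ ≤ (√π ‖B‖ / (2√b)) · ∫_0^t (‖g(s)‖ e^{μ(A)(t−s)} / √(t−s)) · erfc(R√(b(t−s))) ds. -/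
open MeasureTheory Filter Matrix NormedSpace

section Auxiliary

open scoped RealInnerProductSpace

lemma matAct_eigen {N : ℕ} (S : Matrix (Fin N) (Fin N) ℝ) (hS : S.IsHermitian) (j : Fin N) :
    matAct S (hS.eigenvectorBasis j) = hS.eigenvalues j • hS.eigenvectorBasis j := by
  have h1 := hS.mulVec_eigenvectorBasis j
  ext i
  simpa [matAct, Matrix.toEuclideanLin_apply] using congrFun h1 i

lemma quadform_sum {N : ℕ} (S : Matrix (Fin N) (Fin N) ℝ) (hS : S.IsHermitian)
    (u : EuclideanSpace ℝ (Fin N)) :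
    ⟪u, matAct S u⟫ = ∑ j, hS.eigenvalues j * ⟪u, hS.eigenvectorBasis j⟫ ^ 2 := by
  set e := hS.eigenvectorBasis with he
  have hsum : ∑ j, ⟪e j, u⟫ • e j = u := by
    simpa [OrthonormalBasis.repr_apply_apply] using e.sum_repr u
  have h2 : matAct S u = ∑ j, ⟪e j, u⟫ • (hS.eigenvalues j • e j) := by
    conv_lhs => rw [← hsum]
    rw [show matAct S (∑ j, ⟪e j, u⟫ • e j) = ∑ j, ⟪e j, u⟫ • matAct S (e j) by
      simp only [matAct, map_sum, LinearMap.map_smul]]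
    exact Finset.sum_congr rfl fun j _ => by rw [matAct_eigen S hS j]
  rw [h2, inner_sum]
  refine Finset.sum_congr rfl fun j _ => ?_
  simp only [inner_smul_right, real_inner_comm u (e j)]
  ring

lemma norm_sq_sum {N : ℕ} (S : Matrix (Fin N) (Fin N) ℝ) (hS : S.IsHermitian)
    (u : EuclideanSpace ℝ (Fin N)) :
    ‖u‖ ^ 2 = ∑ j, ⟪u, hS.eigenvectorBasis j⟫ ^ 2 := by
  have := hS.eigenvectorBasis.sum_inner_mul_inner u u
  rw [real_inner_self_eq_norm_sq] at this
  rw [← this]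
  exact Finset.sum_congr rfl fun j _ => by rw [real_inner_comm (hS.eigenvectorBasis j) u]; ring

lemma quadform_le_lambdaMax {N : ℕ} [Nonempty (Fin N)] (S : Matrix (Fin N) (Fin N) ℝ)
    (hS : S.IsHermitian) (u : EuclideanSpace ℝ (Fin N)) :
    ⟪u, matAct S u⟫ ≤ lambdaMax S * ‖u‖ ^ 2 := by
  rw [quadform_sum S hS u, norm_sq_sum S hS u, lambdaMax, dif_pos hS, Finset.mul_sum]
  refine Finset.sum_le_sum fun j _ => ?_
  exact mul_le_mul_of_nonneg_right
    (le_ciSup (Set.Finite.bddAbove (Set.finite_range _)) j) (sq_nonneg _)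

lemma lambdaMin_le_quadform {N : ℕ} [Nonempty (Fin N)] (S : Matrix (Fin N) (Fin N) ℝ)
    (hS : S.IsHermitian) (u : EuclideanSpace ℝ (Fin N)) :
    lambdaMin S * ‖u‖ ^ 2 ≤ ⟪u, matAct S u⟫ := by
  rw [quadform_sum S hS u, norm_sq_sum S hS u, lambdaMin, dif_pos hS, Finset.mul_sum]
  refine Finset.sum_le_sum fun j _ => ?_
  exact mul_le_mul_of_nonneg_right
    (ciInf_le (Set.Finite.bddBelow (Set.finite_range _)) j) (sq_nonneg _)

lemma sym_isHermitian {N : ℕ} (A : Matrix (Fin N) (Fin N) ℝ) :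
    ((1 / 2 : ℝ) • (A + Aᵀ)).IsHermitian := by
  ext i j
  simp [Matrix.conjTranspose_apply, Matrix.transpose_apply, Matrix.add_apply, Matrix.smul_apply]
  ring

lemma inner_matAct_transpose {N : ℕ} (M : Matrix (Fin N) (Fin N) ℝ)
    (u : EuclideanSpace ℝ (Fin N)) :
    ⟪u, matAct Mᵀ u⟫ = ⟪u, matAct M u⟫ := by
  have h : ∀ (P : Matrix (Fin N) (Fin N) ℝ) (x y : EuclideanSpace ℝ (Fin N)),
      ⟪x, matAct P y⟫ = dotProduct (WithLp.equiv 2 _ x) (P *ᵥ (WithLp.equiv 2 _ y)) := by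
    intro P x y
    simp [matAct, Matrix.toEuclideanLin_apply, PiLp.inner_apply, dotProduct,
      RCLike.inner_apply, conj_trivial]
    exact Finset.sum_congr rfl fun _ _ => mul_comm _ _
  rw [h, h, dotProduct_mulVec, Matrix.vecMul_transpose, dotProduct_comm,
    dotProduct_mulVec]

lemma inner_matAct_sym {N : ℕ} (M : Matrix (Fin N) (Fin N) ℝ) (u : EuclideanSpace ℝ (Fin N)) :
    ⟪u, matAct M u⟫ = ⟪u, matAct ((1 / 2 : ℝ) • (M + Mᵀ)) u⟫ := by
  have h1 : matAct ((1 / 2 : ℝ) • (M + Mᵀ)) u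
      = (1 / 2 : ℝ) • (matAct M u + matAct Mᵀ u) := by
    simp [matAct, map_add, LinearMap.add_apply, LinearMap.smul_apply]
  rw [h1, inner_smul_right, inner_add_right, inner_matAct_transpose]
  ring

set_option maxHeartbeats 1000000 in
set_option synthInstance.maxHeartbeats 1000000 in
lemma norm_matAct_exp_le {N : ℕ} (M : Matrix (Fin N) (Fin N) ℝ) (c : ℝ)
    (hq : ∀ u : EuclideanSpace ℝ (Fin N), ⟪u, matAct M u⟫ ≤ c * ‖u‖ ^ 2)
    {τ : ℝ} (hτ : 0 ≤ τ) (v : EuclideanSpace ℝ (Fin N)) :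
    ‖matAct (exp (τ • M)) v‖ ≤ Real.exp (c * τ) * ‖v‖ := by
  classical
  have hLapp : ∀ (P : Matrix (Fin N) (Fin N) ℝ) (x : EuclideanSpace ℝ (Fin N)),
      Matrix.toEuclideanCLM (𝕜 := ℝ) P x = matAct P x := fun P x =>
    LinearMap.congr_fun (Matrix.coe_toEuclideanCLM_eq_toEuclideanLin P) x
  set L : EuclideanSpace ℝ (Fin N) →L[ℝ] EuclideanSpace ℝ (Fin N) :=
    Matrix.toEuclideanCLM (𝕜 := ℝ) M with hLdef
  have hcont : Continuous (Matrix.toEuclideanCLM (n := Fin N) (𝕜 := ℝ)) := by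
    let lin : Matrix (Fin N) (Fin N) ℝ →ₗ[ℝ]
        (EuclideanSpace ℝ (Fin N) →L[ℝ] EuclideanSpace ℝ (Fin N)) :=
      { toFun := fun P => Matrix.toEuclideanCLM (𝕜 := ℝ) P,
        map_add' := fun x y => map_add _ x y,
        map_smul' := fun r x => (Matrix.toEuclideanCLM (n := Fin N) (𝕜 := ℝ)).map_smul' r x }
    exact LinearMap.continuous_of_finiteDimensional lin
  have hmap : (Matrix.toEuclideanCLM (𝕜 := ℝ) (exp (τ • M))) = exp (τ • L) := by
    letI : SeminormedRing (Matrix (Fin N) (Fin N) ℝ) := Matrix.linftyOpSemiNormedRing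
    letI : NormedRing (Matrix (Fin N) (Fin N) ℝ) := Matrix.linftyOpNormedRing
    letI : NormedAlgebra ℝ (Matrix (Fin N) (Fin N) ℝ) := Matrix.linftyOpNormedAlgebra
    letI : NormedAlgebra ℚ (Matrix (Fin N) (Fin N) ℝ) := NormedAlgebra.restrictScalars ℚ ℝ _
    have hme := map_exp _ hcont (τ • M)
    rw [_root_.map_smul] at hme
    exact hme
  set f : ℝ → EuclideanSpace ℝ (Fin N) := fun σ => exp (σ • L) v with hfdef
  have hf' : ∀ σ : ℝ, HasDerivAt f (L (f σ)) σ := by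
    intro σ
    have h1 : HasDerivAt (fun u : ℝ => exp (u • L)) (exp (σ • L) * L) σ :=
      hasDerivAt_exp_smul_const L σ
    have h2 := h1.clm_apply (hasDerivAt_const σ v)
    simp only [map_zero, add_zero] at h2
    have hc0 : Commute (σ • L) L := by
      show (σ • L) * L = L * (σ • L)
      ext x
      simp [ContinuousLinearMap.mul_apply, _root_.map_smul]
    have hcomm : exp (σ • L) * L = L * exp (σ • L) := hc0.exp_left.eq
    rw [hcomm] at h2
    simpa [ContinuousLinearMap.mul_apply] using h2
  set φ : ℝ → ℝ := fun σ => ⟪f σ, f σ⟫ * Real.exp (-(2 * c) * σ) with hφdef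
  have hφ' : ∀ σ : ℝ, HasDerivAt φ
      ((⟪f σ, L (f σ)⟫ + ⟪L (f σ), f σ⟫) * Real.exp (-(2 * c) * σ)
        + ⟪f σ, f σ⟫ * (-(2 * c) * Real.exp (-(2 * c) * σ))) σ := by
    intro σ
    have h1 : HasDerivAt (fun σ => ⟪f σ, f σ⟫) (⟪f σ, L (f σ)⟫ + ⟪L (f σ), f σ⟫) σ :=
      (hf' σ).inner ℝ (hf' σ)
    have h2 : HasDerivAt (fun σ => Real.exp (-(2 * c) * σ))
        (-(2 * c) * Real.exp (-(2 * c) * σ)) σ := by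
      have h3 := ((hasDerivAt_id σ).const_mul (-(2 * c))).exp
      simpa [mul_comm] using h3
    exact h1.mul h2
  have hderiv_nonpos : ∀ σ : ℝ, ((⟪f σ, L (f σ)⟫ + ⟪L (f σ), f σ⟫) * Real.exp (-(2 * c) * σ)
        + ⟪f σ, f σ⟫ * (-(2 * c) * Real.exp (-(2 * c) * σ))) ≤ 0 := by
    intro σ
    have hq' : ⟪f σ, L (f σ)⟫ ≤ c * ‖f σ‖ ^ 2 := by rw [hLapp]; exact hq (f σ)
    have h1 : ⟪L (f σ), f σ⟫ = ⟪f σ, L (f σ)⟫ := real_inner_comm _ _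
    have h2 : ⟪f σ, f σ⟫ = ‖f σ‖ ^ 2 := real_inner_self_eq_norm_sq _
    have hexp : (0:ℝ) < Real.exp (-(2 * c) * σ) := Real.exp_pos _
    rw [h1, h2]
    nlinarith
  have hanti : AntitoneOn φ (Set.Icc 0 τ) := by
    apply antitoneOn_of_deriv_nonpos (convex_Icc 0 τ)
    · exact fun x _ => (hφ' x).differentiableAt.continuousAt.continuousWithinAt
    · exact fun x _ => (hφ' x).differentiableAt.differentiableWithinAt
    · intro x _
      rw [(hφ' x).deriv]
      exact hderiv_nonpos x
  have hφτ : φ τ ≤ φ 0 :=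
    hanti (Set.left_mem_Icc.2 hτ) (Set.right_mem_Icc.2 hτ) hτ
  have hf0 : f 0 = v := by
    have h0 : (0:ℝ) • L = 0 := by ext x; simp
    show exp ((0:ℝ) • L) v = v
    rw [h0, exp_zero, ContinuousLinearMap.one_apply]
  have hφ0 : φ 0 = ‖v‖ ^ 2 := by
    rw [hφdef]
    simp only [hf0, real_inner_self_eq_norm_sq, mul_zero, neg_zero, Real.exp_zero, mul_one]
  have hkey : ‖f τ‖ ^ 2 * Real.exp (-(2 * c) * τ) ≤ ‖v‖ ^ 2 := by
    have h := hφτ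
    rw [hφ0] at h
    rw [hφdef] at h
    simpa only [real_inner_self_eq_norm_sq] using h
  have e1 : Real.exp (-(2 * c) * τ) * Real.exp (c * τ) ^ 2 = 1 := by
    rw [sq, ← Real.exp_add, ← Real.exp_add,
      show (-(2 * c) * τ + (c * τ + c * τ)) = 0 by ring, Real.exp_zero]
  have hfin : ‖f τ‖ ^ 2 ≤ (Real.exp (c * τ) * ‖v‖) ^ 2 := by
    calc ‖f τ‖ ^ 2 = ‖f τ‖ ^ 2 * (Real.exp (-(2 * c) * τ) * Real.exp (c * τ) ^ 2) := by
          rw [e1, mul_one]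
      _ = (‖f τ‖ ^ 2 * Real.exp (-(2 * c) * τ)) * Real.exp (c * τ) ^ 2 := by ring
      _ ≤ ‖v‖ ^ 2 * Real.exp (c * τ) ^ 2 := mul_le_mul_of_nonneg_right hkey (sq_nonneg _)
      _ = (Real.exp (c * τ) * ‖v‖) ^ 2 := by ring
  have hfinal : ‖f τ‖ ≤ Real.exp (c * τ) * ‖v‖ := by
    have hnn : (0:ℝ) ≤ Real.exp (c * τ) * ‖v‖ :=
      mul_nonneg (Real.exp_pos _).le (norm_nonneg _)
    calc ‖f τ‖ = Real.sqrt (‖f τ‖ ^ 2) := (Real.sqrt_sq (norm_nonneg _)).symm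
      _ ≤ Real.sqrt ((Real.exp (c * τ) * ‖v‖) ^ 2) := Real.sqrt_le_sqrt hfin
      _ = Real.exp (c * τ) * ‖v‖ := Real.sqrt_sq hnn
  have heq : matAct (exp (τ • M)) v = f τ := by
    rw [← hLapp, hmap]
  rw [heq]
  exact hfinal

lemma gauss_integrable : MeasureTheory.Integrable (fun u : ℝ => Real.exp (-u ^ 2)) := by
  simpa using integrable_exp_neg_mul_sq (b := 1) one_pos

lemma erfc_nonneg (x : ℝ) : 0 ≤ erfc x := by
  apply mul_nonneg (by positivity)
  exact setIntegral_nonneg measurableSet_Ioi fun u _ => (Real.exp_pos _).le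

lemma erfc_antitone : Antitone erfc := by
  intro x y hxy
  apply mul_le_mul_of_nonneg_left _ (by positivity)
  apply setIntegral_mono_set gauss_integrable.integrableOn
  · exact Eventually.of_forall fun u => (Real.exp_pos _).le
  · exact HasSubset.Subset.eventuallyLE (Set.Ioi_subset_Ioi hxy)

lemma erfc_measurable : Measurable erfc := by
  have h : Antitone fun x => ∫ u in Set.Ioi x, Real.exp (-u ^ 2) := by
    intro x y hxy
    apply setIntegral_mono_set gauss_integrable.integrableOn
    · exact Eventually.of_forall fun u => (Real.exp_pos _).le
    · exact HasSubset.Subset.eventuallyLE (Set.Ioi_subset_Ioi hxy)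
  exact h.measurable.const_mul _

lemma gauss_Ioi_eq (x : ℝ) :
    ∫ u in Set.Ioi x, Real.exp (-u ^ 2) = Real.sqrt Real.pi / 2 * erfc x := by
  rw [erfc]
  have hπ : Real.sqrt Real.pi ≠ 0 := by positivity
  field_simp

lemma gauss_scaled (c : ℝ) (hc : 0 < c) (R : ℝ) :
    ∫ ω in Set.Ioi R, Real.exp (-(c * ω ^ 2))
      = Real.sqrt Real.pi / (2 * Real.sqrt c) * erfc (Real.sqrt c * R) := by
  have hsc : 0 < Real.sqrt c := Real.sqrt_pos.2 hc
  have h1 : ∀ ω : ℝ, Real.exp (-(c * ω ^ 2))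
      = Real.exp (-(Real.sqrt c * ω) ^ 2) := by
    intro ω
    rw [mul_pow, Real.sq_sqrt hc.le]
  simp_rw [h1]
  rw [MeasureTheory.integral_comp_mul_left_Ioi (fun u => Real.exp (-u ^ 2)) R hsc,
    gauss_Ioi_eq, smul_eq_mul]
  field_simp

end Auxiliary
section Main
open scoped RealInnerProductSpace

set_option maxHeartbeats 2000000 in
set_option synthInstance.maxHeartbeats 1000000 in
theorem stmt3 {N : ℕ} (A B : Matrix (Fin N) (Fin N) ℝ)
    (hBpd : (B + Bᵀ).PosDef)
    (b : ℝ) (hb : b = lambdaMin ((1 / 2 : ℝ) • (B + Bᵀ))) (hbpos : 0 < b)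
    (g : ℝ → EuclideanSpace ℝ (Fin N)) (hg : ContinuousOn g (Set.Ici 0))
    (t z : ℝ) (ht : 0 < t) (hz : 0 < z) (R : ℝ) (hR : 0 < R) :
    ‖∫ s in (0 : ℝ)..t, ∫ ω in Set.Ioi R,
        Real.cos (ω * z) • matAct (NormedSpace.exp ((t - s) • (A - ω ^ 2 • B))) (matAct B (g s))‖
      ≤ Real.sqrt Real.pi * matOpNorm B / (2 * Real.sqrt b) *
          ∫ s in (0 : ℝ)..t,
            ‖g s‖ * Real.exp (logNorm A * (t - s)) / Real.sqrt (t - s) *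
              erfc (R * Real.sqrt (b * (t - s))) := by
  classical
  -- dispose of the degenerate case N = 0
  rcases Nat.eq_zero_or_pos N with hN | hN
  · exfalso
    subst hN
    have h0 : lambdaMin ((1 / 2 : ℝ) • (B + Bᵀ)) = 0 := by
      rw [lambdaMin]
      split
      · rw [iInf, Set.range_eq_empty, Real.sInf_empty]
      · rfl
    rw [h0] at hb
    exact absurd (hb ▸ hbpos) (lt_irrefl 0)
  haveI : Nonempty (Fin N) := ⟨⟨0, hN⟩⟩
  -- quadratic form bounds
  have hquadB : ∀ u : EuclideanSpace ℝ (Fin N), b * ‖u‖ ^ 2 ≤ ⟪u, matAct B u⟫ := by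
    intro u
    rw [inner_matAct_sym B u, hb]
    exact lambdaMin_le_quadform _ (sym_isHermitian B) u
  have hquadA : ∀ u : EuclideanSpace ℝ (Fin N), ⟪u, matAct A u⟫ ≤ logNorm A * ‖u‖ ^ 2 := by
    intro u
    rw [inner_matAct_sym A u]
    exact quadform_le_lambdaMax _ (sym_isHermitian A) u
  have hquadM : ∀ (ω : ℝ) (u : EuclideanSpace ℝ (Fin N)),
      ⟪u, matAct (A - ω ^ 2 • B) u⟫ ≤ (logNorm A - ω ^ 2 * b) * ‖u‖ ^ 2 := by
    intro ω u
    have hsplit : matAct (A - ω ^ 2 • B) u = matAct A u - ω ^ 2 • matAct B u := by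
      simp [matAct, map_sub, _root_.map_smul, LinearMap.sub_apply, LinearMap.smul_apply]
    rw [hsplit, inner_sub_right, real_inner_smul_right]
    have h1 := mul_le_mul_of_nonneg_left (hquadB u) (sq_nonneg ω)
    have h2 := hquadA u
    nlinarith
  set C : ℝ := Real.sqrt Real.pi * matOpNorm B / (2 * Real.sqrt b) with hC
  have hBnn : 0 ≤ matOpNorm B := norm_nonneg _
  have hCnn : 0 ≤ C := by
    apply div_nonneg (mul_nonneg (Real.sqrt_nonneg _) hBnn) (by positivity)
  set h : ℝ → ℝ := fun s => ‖g s‖ * Real.exp (logNorm A * (t - s)) / Real.sqrt (t - s) *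
      erfc (R * Real.sqrt (b * (t - s))) with hh
  have hh_nonneg : ∀ s, 0 ≤ h s := fun s =>
    mul_nonneg (div_nonneg (mul_nonneg (norm_nonneg _) (Real.exp_pos _).le)
      (Real.sqrt_nonneg _)) (erfc_nonneg _)
  -- pointwise bound on the inner integral
  have hpoint : ∀ s ∈ Set.Ioo (0:ℝ) t,
      ‖∫ ω in Set.Ioi R,
        Real.cos (ω * z) • matAct (exp ((t - s) • (A - ω ^ 2 • B))) (matAct B (g s))‖
        ≤ C * h s := by
    intro s hs
    have hτ : 0 < t - s := sub_pos.2 hs.2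
    have hsqτ : 0 < Real.sqrt (t - s) := Real.sqrt_pos.2 hτ
    have hsqb : 0 < Real.sqrt b := Real.sqrt_pos.2 hbpos
    have hc'pos : 0 < b * (t - s) := mul_pos hbpos hτ
    have hw : ‖matAct B (g s)‖ ≤ matOpNorm B * ‖g s‖ := by
      simpa [matAct, matOpNorm] using
        (LinearMap.toContinuousLinearMap (Matrix.toEuclideanLin B)).le_opNorm (g s)
    set K : ℝ := matOpNorm B * ‖g s‖ * Real.exp (logNorm A * (t - s)) with hK
    have hKnn : 0 ≤ K := mul_nonneg (mul_nonneg hBnn (norm_nonneg _)) (Real.exp_pos _).le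
    have hptw : ∀ ω : ℝ,
        ‖Real.cos (ω * z) • matAct (exp ((t - s) • (A - ω ^ 2 • B))) (matAct B (g s))‖
          ≤ K * Real.exp (-(b * (t - s) * ω ^ 2)) := by
      intro ω
      rw [norm_smul, Real.norm_eq_abs]
      have h1 := norm_matAct_exp_le (A - ω ^ 2 • B) (logNorm A - ω ^ 2 * b) (hquadM ω)
        hτ.le (matAct B (g s))
      have h2 : Real.exp ((logNorm A - ω ^ 2 * b) * (t - s)) * ‖matAct B (g s)‖
          ≤ Real.exp ((logNorm A - ω ^ 2 * b) * (t - s)) * (matOpNorm B * ‖g s‖) :=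
        mul_le_mul_of_nonneg_left hw (Real.exp_pos _).le
      have h3 : Real.exp ((logNorm A - ω ^ 2 * b) * (t - s)) * (matOpNorm B * ‖g s‖)
          = K * Real.exp (-(b * (t - s) * ω ^ 2)) := by
        rw [show (logNorm A - ω ^ 2 * b) * (t - s)
            = logNorm A * (t - s) + -(b * (t - s) * ω ^ 2) by ring, Real.exp_add, hK]
        ring
      calc |Real.cos (ω * z)| * ‖matAct (exp ((t - s) • (A - ω ^ 2 • B))) (matAct B (g s))‖
          ≤ 1 * (Real.exp ((logNorm A - ω ^ 2 * b) * (t - s)) * ‖matAct B (g s)‖) :=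
            mul_le_mul (Real.abs_cos_le_one _) h1 (norm_nonneg _) zero_le_one
        _ = Real.exp ((logNorm A - ω ^ 2 * b) * (t - s)) * ‖matAct B (g s)‖ := one_mul _
        _ ≤ Real.exp ((logNorm A - ω ^ 2 * b) * (t - s)) * (matOpNorm B * ‖g s‖) := h2
        _ = K * Real.exp (-(b * (t - s) * ω ^ 2)) := h3
    have hIntBound : Integrable (fun ω => K * Real.exp (-(b * (t - s) * ω ^ 2)))
        (volume.restrict (Set.Ioi R)) := by
      have h1 : Integrable (fun ω : ℝ => Real.exp (-(b * (t - s) * ω ^ 2))) := by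
        simpa [neg_mul] using integrable_exp_neg_mul_sq hc'pos
      exact (h1.const_mul K).restrict
    have hle := MeasureTheory.norm_integral_le_of_norm_le hIntBound
      (Eventually.of_forall fun ω => hptw ω)
    have hval : ∫ ω in Set.Ioi R, K * Real.exp (-(b * (t - s) * ω ^ 2))
        = K * (Real.sqrt Real.pi / (2 * Real.sqrt (b * (t - s)))
            * erfc (Real.sqrt (b * (t - s)) * R)) := by
      rw [MeasureTheory.integral_const_mul, gauss_scaled _ hc'pos R]
    have heq2 : K * (Real.sqrt Real.pi / (2 * Real.sqrt (b * (t - s)))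
        * erfc (Real.sqrt (b * (t - s)) * R)) = C * h s := by
      rw [Real.sqrt_mul hbpos.le, hK, hC, hh]
      rw [mul_comm (Real.sqrt b * Real.sqrt (t - s)) R]
      simp only [Real.sqrt_mul hbpos.le (t - s)]
      field_simp
    calc ‖∫ ω in Set.Ioi R,
        Real.cos (ω * z) • matAct (exp ((t - s) • (A - ω ^ 2 • B))) (matAct B (g s))‖
        ≤ ∫ ω in Set.Ioi R, K * Real.exp (-(b * (t - s) * ω ^ 2)) := hle
      _ = C * h s := by rw [hval, heq2]
  -- almost-everywhere membership in Ioo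
  have hmemIoo : ∀ᵐ s ∂volume.restrict (Set.uIoc 0 t), s ∈ Set.Ioo 0 t := by
    rw [Set.uIoc_of_le ht.le]
    have h1 : ∀ᵐ s ∂volume.restrict (Set.Ioc 0 t), s ∈ Set.Ioc 0 t :=
      ae_restrict_mem measurableSet_Ioc
    have h2 : ∀ᵐ (s : ℝ) ∂volume.restrict (Set.Ioc 0 t), s ≠ t := by
      refine ae_restrict_of_ae ?_
      have : volume ({t} : Set ℝ) = 0 := Real.volume_singleton
      rw [ae_iff]
      simpa [not_not] using this
    filter_upwards [h1, h2] with s hs1 hs2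
    exact ⟨hs1.1, lt_of_le_of_ne hs1.2 hs2⟩
  have hae : ∀ᵐ s ∂volume.restrict (Set.uIoc 0 t),
      ‖∫ ω in Set.Ioi R,
        Real.cos (ω * z) • matAct (exp ((t - s) • (A - ω ^ 2 • B))) (matAct B (g s))‖
        ≤ C * h s := hmemIoo.mono fun s hs => hpoint s hs
  -- integrability of the bound
  obtain ⟨Mg, hMg⟩ := (isCompact_Icc (a := (0:ℝ)) (b := t)).exists_bound_of_continuousOn
    (hg.mono Set.Icc_subset_Ici_self)
  have hMgnn : 0 ≤ Mg := le_trans (norm_nonneg (g 0)) (hMg 0 ⟨le_refl 0, ht.le⟩)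
  set Q : ℝ := Mg * Real.exp (|logNorm A| * t) with hQ
  have hQnn : 0 ≤ Q := mul_nonneg hMgnn (Real.exp_pos _).le
  set M' : ℝ := C * (Q * erfc 0) with hM'
  have hM'nn : 0 ≤ M' := mul_nonneg hCnn (mul_nonneg hQnn (erfc_nonneg _))
  have hrint : IntervalIntegrable (fun s => M' * (t - s) ^ (-(1/2) : ℝ)) volume 0 t := by
    have h0 : IntervalIntegrable (fun x : ℝ => x ^ (-(1/2) : ℝ)) volume 0 t :=
      intervalIntegral.intervalIntegrable_rpow' (by norm_num)
    have h1 := (h0.comp_sub_left t).symm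
    simp only [sub_zero, sub_self] at h1
    exact h1.const_mul M'
  have hmeas : AEStronglyMeasurable (fun s => C * h s) (volume.restrict (Set.uIoc 0 t)) := by
    rw [Set.uIoc_of_le ht.le]
    have hgm : AEStronglyMeasurable (fun s => ‖g s‖) (volume.restrict (Set.Ioc 0 t)) :=
      ((hg.mono (fun x hx => le_of_lt hx.1)).norm).aestronglyMeasurable measurableSet_Ioc
    have m1 : Measurable fun s : ℝ => t - s := measurable_const.sub measurable_id
    have m2 : Measurable fun s : ℝ => Real.exp (logNorm A * (t - s)) :=
      (m1.const_mul (logNorm A)).exp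
    have m3 : Measurable fun s : ℝ => Real.sqrt (t - s) := m1.sqrt
    have m4 : Measurable fun s : ℝ => erfc (R * Real.sqrt (b * (t - s))) :=
      erfc_measurable.comp (((m1.const_mul b).sqrt).const_mul R)
    simp only [hh, div_eq_mul_inv]
    exact (((hgm.mul m2.aestronglyMeasurable).mul m3.inv.aestronglyMeasurable).mul
      m4.aestronglyMeasurable).const_mul C
  have haebd : ∀ᵐ s ∂volume.restrict (Set.uIoc 0 t),
      ‖C * h s‖ ≤ ‖M' * (t - s) ^ (-(1/2) : ℝ)‖ := by
    filter_upwards [hmemIoo] with s hs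
    have hτ : 0 < t - s := sub_pos.2 hs.2
    have hsqτ : 0 < Real.sqrt (t - s) := Real.sqrt_pos.2 hτ
    have hrpow : (t - s) ^ (-(1/2) : ℝ) = (Real.sqrt (t - s))⁻¹ := by
      rw [Real.rpow_neg hτ.le, Real.sqrt_eq_rpow]
    have hP : ‖g s‖ * Real.exp (logNorm A * (t - s)) ≤ Q := by
      rw [hQ]
      apply mul_le_mul (hMg s ⟨hs.1.le, hs.2.le⟩) _ (Real.exp_pos _).le hMgnn
      apply Real.exp_le_exp.2
      calc logNorm A * (t - s) ≤ |logNorm A| * (t - s) :=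
            mul_le_mul_of_nonneg_right (le_abs_self _) hτ.le
        _ ≤ |logNorm A| * t := mul_le_mul_of_nonneg_left (by linarith [hs.1]) (abs_nonneg _)
    have herfc : erfc (R * Real.sqrt (b * (t - s))) ≤ erfc 0 :=
      erfc_antitone (by positivity)
    have hhs : h s ≤ Q * erfc 0 * (Real.sqrt (t - s))⁻¹ := by
      rw [hh]
      have e1 : ‖g s‖ * Real.exp (logNorm A * (t - s)) / Real.sqrt (t - s)
          ≤ Q * (Real.sqrt (t - s))⁻¹ := by
        rw [div_eq_mul_inv]
        exact mul_le_mul_of_nonneg_right hP (by positivity)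
      calc ‖g s‖ * Real.exp (logNorm A * (t - s)) / Real.sqrt (t - s)
            * erfc (R * Real.sqrt (b * (t - s)))
          ≤ (Q * (Real.sqrt (t - s))⁻¹) * erfc 0 := by
            apply mul_le_mul e1 herfc (erfc_nonneg _) (by positivity)
        _ = Q * erfc 0 * (Real.sqrt (t - s))⁻¹ := by ring
    rw [Real.norm_eq_abs, Real.norm_eq_abs, abs_of_nonneg (mul_nonneg hCnn (hh_nonneg s)),
      abs_of_nonneg (mul_nonneg hM'nn (by positivity)), hrpow, hM']
    calc C * h s ≤ C * (Q * erfc 0 * (Real.sqrt (t - s))⁻¹) :=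
          mul_le_mul_of_nonneg_left hhs hCnn
      _ = C * (Q * erfc 0) * (Real.sqrt (t - s))⁻¹ := by ring
  have hbd_int : IntervalIntegrable (fun s => C * h s) volume 0 t :=
    hrint.mono_fun hmeas haebd
  -- conclude
  have hfinal := intervalIntegral.norm_integral_le_abs_of_norm_le hae hbd_int
  rw [abs_of_nonneg (intervalIntegral.integral_nonneg ht.le
      fun s _ => mul_nonneg hCnn (hh_nonneg s)),
    intervalIntegral.integral_const_mul] at hfinal
  exact hfinal

end Main
end

section
/- Let A, B be real N×N matrices such that B + Bᵀ is positive definite, with b := λ_min((B+Bᵀ)/2) > 0, and let g : [0,∞) → ℝ^N be continuous. Fix t > 0 and z > 0, and define J₂(R) := ∫_0^t ( ∫_R^∞ exp((A − ω²B)(t−s)) B g(s) cos(ωz) dω ) ds. Then J₂(R) → 0 as R → ∞. -/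
open MeasureTheory Filter Matrix NormedSpace

/-! ### Auxiliary machinery -/

/-- The continuous-linear-map version of the matrix action. -/
noncomputable abbrev toCLM {N : ℕ} (M : Matrix (Fin N) (Fin N) ℝ) :
    EuclideanSpace ℝ (Fin N) →L[ℝ] EuclideanSpace ℝ (Fin N) :=
  Matrix.toEuclideanCLM (𝕜 := ℝ) M

lemma toCLM_continuous {N : ℕ} : Continuous (toCLM (N := N)) := by
  have : (toCLM (N := N)) = fun M =>
      ({ toFun := toCLM (N := N), map_add' := fun x y => map_add _ x y,
         map_smul' := fun c x => map_smul _ c x } : Matrix (Fin N) (Fin N) ℝ →ₗ[ℝ]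
         (EuclideanSpace ℝ (Fin N) →L[ℝ] EuclideanSpace ℝ (Fin N))) M := rfl
  rw [this]
  exact LinearMap.continuous_of_finiteDimensional _

lemma matAct_toCLM {N : ℕ} (M : Matrix (Fin N) (Fin N) ℝ) (v : EuclideanSpace ℝ (Fin N)) :
    matAct M v = toCLM M v := by
  rw [matAct, ← Matrix.coe_toEuclideanCLM_eq_toEuclideanLin]; rfl

section LocalInstances
attribute [local instance] Matrix.linftyOpNormedRing Matrix.linftyOpNormedAlgebra

lemma toCLM_exp' {N : ℕ} (M : Matrix (Fin N) (Fin N) ℝ) :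
    toCLM (exp M) = exp (toCLM M) :=
  map_exp (Matrix.toEuclideanCLM (𝕜 := ℝ)) toCLM_continuous M

end LocalInstances

lemma toCLM_exp {N : ℕ} (M : Matrix (Fin N) (Fin N) ℝ) :
    toCLM (exp M) = exp (toCLM M) := by exact toCLM_exp' M

lemma matOpNorm_eq {N : ℕ} (M : Matrix (Fin N) (Fin N) ℝ) :
    matOpNorm M = ‖toCLM M‖ := by
  rw [matOpNorm]
  congr 1

lemma rayleigh_lower {N : ℕ} {S : Matrix (Fin N) (Fin N) ℝ} (hS : S.IsHermitian) {b : ℝ}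
    (hble : ∀ i, b ≤ hS.eigenvalues i) (x : EuclideanSpace ℝ (Fin N)) :
    b * ‖x‖ ^ 2 ≤ inner ℝ x (Matrix.toEuclideanLin S x) := by
  classical
  set e := hS.eigenvectorBasis with he
  have heig : ∀ i, Matrix.toEuclideanLin S (e i) = hS.eigenvalues i • e i := by
    intro i
    apply (WithLp.equiv 2 (Fin N → ℝ)).injective
    simp only [WithLp.equiv_apply, Matrix.ofLp_toEuclideanLin_apply]
    have := hS.mulVec_eigenvectorBasis i
    simpa using this
  have hsym : (Matrix.toEuclideanLin S).IsSymmetric :=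
    Matrix.isHermitian_iff_isSymmetric.1 hS
  have hx : ∀ y : EuclideanSpace ℝ (Fin N),
      (inner ℝ x y : ℝ) = ∑ i, inner ℝ x (e i) * inner ℝ (e i) y :=
    fun y => (e.sum_inner_mul_inner x y).symm
  rw [hx]
  have : ∀ i, (inner ℝ (e i) (Matrix.toEuclideanLin S x) : ℝ)
      = hS.eigenvalues i * inner ℝ (e i) x := by
    intro i
    rw [← hsym (e i) x, heig, inner_smul_left]
    simp
  simp_rw [this]
  have hnorm : ‖x‖ ^ 2 = ∑ i, inner ℝ x (e i) * (inner ℝ (e i) x : ℝ) := by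
    rw [e.sum_inner_mul_inner x x, real_inner_self_eq_norm_sq]
  rw [hnorm, Finset.mul_sum]
  apply Finset.sum_le_sum
  intro i _
  have hinner : (inner ℝ x (e i) : ℝ) = inner ℝ (e i) x := real_inner_comm _ _
  rw [hinner]
  have hsq : (0:ℝ) ≤ inner ℝ (e i) x * inner ℝ (e i) x := mul_self_nonneg _
  calc b * (inner ℝ (e i) x * (inner ℝ (e i) x : ℝ))
      ≤ hS.eigenvalues i * (inner ℝ (e i) x * inner ℝ (e i) x) :=
        mul_le_mul_of_nonneg_right (hble i) hsq
    _ = inner ℝ (e i) x * (hS.eigenvalues i * inner ℝ (e i) x) := by ring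

lemma inner_transpose {N : ℕ} (M : Matrix (Fin N) (Fin N) ℝ) (x : EuclideanSpace ℝ (Fin N)) :
    (inner ℝ x (Matrix.toEuclideanLin Mᵀ x) : ℝ) = inner ℝ x (Matrix.toEuclideanLin M x) := by
  rw [← Matrix.conjTranspose_eq_transpose_of_trivial,
    Matrix.toEuclideanLin_conjTranspose_eq_adjoint, LinearMap.adjoint_inner_right]
  exact real_inner_comm _ _

lemma exp_clm_norm_le {E : Type*} [NormedAddCommGroup E] [InnerProductSpace ℝ E]
    [CompleteSpace E] (T : E →L[ℝ] E) (c : ℝ)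
    (hT : ∀ x : E, (inner ℝ x (T x) : ℝ) ≤ c * ‖x‖ ^ 2)
    {τ : ℝ} (hτ : 0 ≤ τ) (v : E) :
    ‖exp (τ • T) v‖ ≤ Real.exp (c * τ) * ‖v‖ := by
  set x : ℝ → E := fun τ => exp (τ • T) v with hxdef
  have hx : ∀ u : ℝ, HasDerivAt x (T (x u)) u := by
    intro u
    have h1 : HasDerivAt (fun t : ℝ => exp (t • T)) (T * exp (u • T)) u :=
      hasDerivAt_exp_smul_const' T u
    have h2 := h1.clm_apply (hasDerivAt_const u v)
    simpa [ContinuousLinearMap.mul_apply] using h2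
  set f : ℝ → ℝ := fun u => Real.exp (-(2*c)*u) * inner ℝ (x u) (x u) with hfdef
  have hf : ∀ u : ℝ, HasDerivAt f
      (-(2*c) * Real.exp (-(2*c)*u) * inner ℝ (x u) (x u)
        + Real.exp (-(2*c)*u) * ((inner ℝ (x u) (T (x u)) : ℝ) + inner ℝ (T (x u)) (x u))) u := by
    intro u
    have e1 : HasDerivAt (fun u : ℝ => Real.exp (-(2*c)*u)) (-(2*c) * Real.exp (-(2*c)*u)) u := by
      have := ((hasDerivAt_id u).const_mul (-(2*c))).exp
      simpa [mul_comm] using this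
    have e2 : HasDerivAt (fun u : ℝ => (inner ℝ (x u) (x u) : ℝ))
        ((inner ℝ (x u) (T (x u)) : ℝ) + inner ℝ (T (x u)) (x u)) u :=
      (hx u).inner ℝ (hx u)
    exact e1.mul e2
  have hderiv_nonpos : ∀ u : ℝ, deriv f u ≤ 0 := by
    intro u
    rw [(hf u).deriv]
    have h3 : (inner ℝ (x u) (T (x u)) : ℝ) + inner ℝ (T (x u)) (x u) ≤ 2 * c * ‖x u‖ ^ 2 := by
      have := hT (x u)
      have hc : (inner ℝ (T (x u)) (x u) : ℝ) = inner ℝ (x u) (T (x u)) := real_inner_comm _ _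
      rw [hc]
      linarith
    have hexp : (0:ℝ) < Real.exp (-(2*c)*u) := Real.exp_pos _
    rw [real_inner_self_eq_norm_sq]
    nlinarith [sq_nonneg ‖x u‖]
  have hanti : Antitone f :=
    antitone_of_deriv_nonpos (fun u => (hf u).differentiableAt) hderiv_nonpos
  have h0 : f τ ≤ f 0 := hanti hτ
  have hf0 : f 0 = ‖v‖ ^ 2 := by
    simp [hfdef, hxdef, real_inner_self_eq_norm_sq]
  rw [hf0, hfdef] at h0
  simp only [real_inner_self_eq_norm_sq] at h0
  have hE : Real.exp (-(2*c)*τ) * (Real.exp (c*τ)) ^ 2 = 1 := by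
    rw [sq, ← Real.exp_add, ← Real.exp_add]
    ring_nf
    exact Real.exp_zero
  have hexp1 : (0:ℝ) < Real.exp (-(2*c)*τ) := Real.exp_pos _
  have hexp2 : (0:ℝ) < Real.exp (c*τ) := Real.exp_pos _
  have hsq : ‖x τ‖ ^ 2 ≤ (Real.exp (c*τ) * ‖v‖) ^ 2 := by
    nlinarith [h0, hE, norm_nonneg v, norm_nonneg (x τ)]
  nlinarith [hsq, norm_nonneg (x τ), mul_nonneg hexp2.le (norm_nonneg v)]

/-- The quadratic-form bound for `A - ω² B`. -/
lemma quad_bound {N : ℕ} (A B : Matrix (Fin N) (Fin N) ℝ)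
    {hS : ((1/2 : ℝ) • (B + Bᵀ)).IsHermitian} {b : ℝ}
    (hble : ∀ i, b ≤ hS.eigenvalues i) (ω : ℝ) (x : EuclideanSpace ℝ (Fin N)) :
    (inner ℝ x ((toCLM A - ω ^ 2 • toCLM B) x) : ℝ)
      ≤ (matOpNorm A - ω ^ 2 * b) * ‖x‖ ^ 2 := by
  have hA : (inner ℝ x (toCLM A x) : ℝ) ≤ matOpNorm A * ‖x‖ ^ 2 := by
    calc (inner ℝ x (toCLM A x) : ℝ) ≤ ‖x‖ * ‖toCLM A x‖ := real_inner_le_norm _ _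
      _ ≤ ‖x‖ * (‖toCLM A‖ * ‖x‖) := by
          gcongr
          exact (toCLM A).le_opNorm x
      _ = matOpNorm A * ‖x‖ ^ 2 := by rw [matOpNorm_eq]; ring
  have hB : b * ‖x‖ ^ 2 ≤ (inner ℝ x (toCLM B x) : ℝ) := by
    have h1 := rayleigh_lower hS hble x
    have h2 : (inner ℝ x (Matrix.toEuclideanLin ((1/2 : ℝ) • (B + Bᵀ)) x) : ℝ)
        = inner ℝ x (Matrix.toEuclideanLin B x) := by
      rw [_root_.map_smul, map_add]
      simp only [LinearMap.smul_apply, LinearMap.add_apply, inner_smul_right, inner_add_right]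
      rw [inner_transpose]
      ring
    rw [h2] at h1
    rw [← Matrix.coe_toEuclideanCLM_eq_toEuclideanLin] at h1
    exact h1
  have hnn : (0:ℝ) ≤ ω ^ 2 := sq_nonneg ω
  have : (inner ℝ x ((toCLM A - ω ^ 2 • toCLM B) x) : ℝ)
      = inner ℝ x (toCLM A x) - ω ^ 2 * inner ℝ x (toCLM B x) := by
    simp [inner_sub_right, inner_smul_right]
  rw [this]
  have := mul_le_mul_of_nonneg_left hB hnn
  nlinarith

/-- Pointwise exponential decay bound on the integrand. -/
lemma matAct_exp_norm_le {N : ℕ} (A B : Matrix (Fin N) (Fin N) ℝ)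
    {hS : ((1/2 : ℝ) • (B + Bᵀ)).IsHermitian} {b : ℝ}
    (hble : ∀ i, b ≤ hS.eigenvalues i) (ω : ℝ) {τ : ℝ} (hτ : 0 ≤ τ)
    (w : EuclideanSpace ℝ (Fin N)) :
    ‖matAct (exp (τ • (A - ω ^ 2 • B))) w‖
      ≤ Real.exp ((matOpNorm A - ω ^ 2 * b) * τ) * ‖w‖ := by
  have h1 : matAct (exp (τ • (A - ω ^ 2 • B))) w
      = exp (τ • (toCLM A - ω ^ 2 • toCLM B)) w := by
    rw [matAct_toCLM, toCLM_exp]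
    have h2 : toCLM (τ • (A - ω ^ 2 • B)) = τ • (toCLM A - ω ^ 2 • toCLM B) := by
      simp only [_root_.map_smul, map_sub]
    rw [h2]
  rw [h1]
  exact exp_clm_norm_le _ _ (quad_bound A B hble ω) hτ w

set_option maxHeartbeats 2000000 in
theorem stmt5 {N : ℕ} (A B : Matrix (Fin N) (Fin N) ℝ)
    (hBpd : (B + Bᵀ).PosDef)
    (b : ℝ) (hb : b = lambdaMin ((1 / 2 : ℝ) • (B + Bᵀ))) (hbpos : 0 < b)
    (g : ℝ → EuclideanSpace ℝ (Fin N)) (hg : ContinuousOn g (Set.Ici 0))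
    (t z : ℝ) (ht : 0 < t) (hz : 0 < z) :
    Tendsto (fun R : ℝ =>
        ∫ s in (0 : ℝ)..t, ∫ ω in Set.Ioi R,
          Real.cos (ω * z) • matAct (NormedSpace.exp ((t - s) • (A - ω ^ 2 • B))) (matAct B (g s)))
      atTop (nhds 0) := by
  classical
  have hS : ((1/2 : ℝ) • (B + Bᵀ)).IsHermitian := by
    unfold Matrix.IsHermitian
    rw [conjTranspose_eq_transpose_of_trivial, transpose_smul, transpose_add,
      transpose_transpose, add_comm Bᵀ B]
  have hble : ∀ i, b ≤ hS.eigenvalues i := by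
    intro i
    rw [hb]
    unfold lambdaMin
    rw [dif_pos hS]
    exact ciInf_le (Set.Finite.bddBelow (Set.finite_range _)) i
  set a := matOpNorm A with ha
  -- the vector field and its uniform bound on [0, t]
  have hwcont : ContinuousOn (fun s => (toCLM B) (g s)) (Set.Ici 0) :=
    (toCLM B).continuous.comp_continuousOn hg
  obtain ⟨K0, hK0⟩ := (isCompact_Icc (a := (0:ℝ)) (b := t)).exists_bound_of_continuousOn
    (hwcont.mono Set.Icc_subset_Ici_self)
  set K := max K0 0 with hK
  have hKnn : 0 ≤ K := le_max_right _ _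
  have hKb : ∀ s ∈ Set.Icc (0:ℝ) t, ‖(toCLM B) (g s)‖ ≤ K :=
    fun s hs => le_trans (hK0 s hs) (le_max_left _ _)
  set C1 := Real.exp (|a| * t) with hC1
  have hC1nn : 0 < C1 := Real.exp_pos _
  set C3 := C1 * K * (Real.sqrt (Real.pi / b) / 2) with hC3
  -- rewrite the integrand in continuous-linear-map form
  have hfeq : ∀ s ω : ℝ,
      Real.cos (ω * z) • matAct (exp ((t - s) • (A - ω ^ 2 • B))) (matAct B (g s))
        = Real.cos (ω * z) •
            (exp ((t - s) • ((toCLM A) - ω ^ 2 • (toCLM B))) ((toCLM B) (g s))) := by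
    intro s ω
    rw [matAct_toCLM, toCLM_exp, matAct_toCLM]
    have h2 : toCLM ((t - s) • (A - ω ^ 2 • B)) = (t - s) • (toCLM A - ω ^ 2 • toCLM B) := by
      simp only [_root_.map_smul, map_sub]
    rw [h2]
  simp only [hfeq, intervalIntegral.integral_of_le ht.le, integral_Ioc_eq_integral_Ioo]
  -- pointwise bound on the integrand
  have hpt : ∀ s ∈ Set.Icc (0:ℝ) t, ∀ ω : ℝ,
      ‖Real.cos (ω * z) •
          (exp ((t - s) • ((toCLM A) - ω ^ 2 • (toCLM B))) ((toCLM B) (g s)))‖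
        ≤ C1 * K * Real.exp (-((t - s) * b) * ω ^ 2) := by
    intro s hs ω
    have hts : 0 ≤ t - s := by linarith [hs.2]
    have h1 : ‖exp ((t - s) • ((toCLM A) - ω ^ 2 • (toCLM B))) ((toCLM B) (g s))‖
        ≤ Real.exp ((a - ω ^ 2 * b) * (t - s)) * ‖(toCLM B) (g s)‖ :=
      exp_clm_norm_le _ _ (quad_bound A B hble ω) hts _
    have h2 : Real.exp ((a - ω ^ 2 * b) * (t - s))
        = Real.exp (a * (t - s)) * Real.exp (-((t - s) * b) * ω ^ 2) := by
      rw [← Real.exp_add]; ring_nf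
    have h3 : Real.exp (a * (t - s)) ≤ C1 := by
      rw [hC1]
      apply Real.exp_le_exp.2
      have h4 : a * (t - s) ≤ |a| * (t - s) := mul_le_mul_of_nonneg_right (le_abs_self a) hts
      have h5 : |a| * (t - s) ≤ |a| * t := by
        apply mul_le_mul_of_nonneg_left _ (abs_nonneg a); linarith [hs.1]
      linarith
    rw [norm_smul]
    have hcos : ‖Real.cos (ω * z)‖ ≤ 1 := by
      rw [Real.norm_eq_abs]; exact Real.abs_cos_le_one _
    have hwb : ‖(toCLM B) (g s)‖ ≤ K := hKb s hs
    have hexpnn : (0:ℝ) < Real.exp (-((t - s) * b) * ω ^ 2) := Real.exp_pos _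
    calc ‖Real.cos (ω * z)‖ * ‖exp ((t - s) • ((toCLM A) - ω ^ 2 • (toCLM B)))
            ((toCLM B) (g s))‖
        ≤ 1 * (Real.exp ((a - ω ^ 2 * b) * (t - s)) * ‖(toCLM B) (g s)‖) := by
          apply mul_le_mul hcos h1 (norm_nonneg _) zero_le_one
      _ = Real.exp (a * (t - s)) * Real.exp (-((t - s) * b) * ω ^ 2) * ‖(toCLM B) (g s)‖ := by
          rw [one_mul, h2]
      _ ≤ C1 * Real.exp (-((t - s) * b) * ω ^ 2) * K := by
          have hh1 := mul_le_mul_of_nonneg_right h3 hexpnn.le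
          have hh2 : Real.exp (a * (t - s)) * Real.exp (-((t - s) * b) * ω ^ 2) *
              ‖(toCLM B) (g s)‖ ≤ C1 * Real.exp (-((t - s) * b) * ω ^ 2) * ‖(toCLM B) (g s)‖ :=
            mul_le_mul_of_nonneg_right hh1 (norm_nonneg _)
          have hh3 : C1 * Real.exp (-((t - s) * b) * ω ^ 2) * ‖(toCLM B) (g s)‖ ≤
              C1 * Real.exp (-((t - s) * b) * ω ^ 2) * K :=
            mul_le_mul_of_nonneg_left hwb (by positivity)
          linarith
      _ = C1 * K * Real.exp (-((t - s) * b) * ω ^ 2) := by ring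
  -- gaussian integrability
  have hgauss : ∀ s ∈ Set.Ioo (0:ℝ) t, ∀ R : ℝ,
      IntegrableOn (fun ω : ℝ => C1 * K * Real.exp (-((t - s) * b) * ω ^ 2)) (Set.Ioi R) := by
    intro s hs R
    have hpos : 0 < (t - s) * b := by
      have := hs.2; apply mul_pos (by linarith) hbpos
    exact ((integrable_exp_neg_mul_sq hpos).const_mul (C1 * K)).integrableOn
  -- integrability of the integrand in ω
  have hfint : ∀ s ∈ Set.Ioo (0:ℝ) t,
      IntegrableOn (fun ω : ℝ => Real.cos (ω * z) •
        (exp ((t - s) • ((toCLM A) - ω ^ 2 • (toCLM B))) ((toCLM B) (g s)))) (Set.Ioi 0) := by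
    intro s hs
    have hcont : Continuous (fun ω : ℝ => Real.cos (ω * z) •
        (exp ((t - s) • ((toCLM A) - ω ^ 2 • (toCLM B))) ((toCLM B) (g s)))) := by
      apply Continuous.fun_smul
      · exact Real.continuous_cos.comp (continuous_id.mul continuous_const)
      · have h1 : Continuous fun ω : ℝ => (t - s) • ((toCLM A) - ω ^ 2 • (toCLM B)) :=
          by fun_prop
        exact ((continuous_iff_continuousAt.2 fun x => (exp_analytic (𝕂 := ℝ) (𝔸 := EuclideanSpace ℝ (Fin N) →L[ℝ] EuclideanSpace ℝ (Fin N)) x).continuousAt).comp h1).clm_apply continuous_const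
    apply Integrable.mono' (hgauss s hs 0) (hcont.aestronglyMeasurable.restrict)
    filter_upwards [ae_restrict_mem measurableSet_Ioi] with ω _
    exact hpt s (Set.mem_Icc.2 ⟨hs.1.le, hs.2.le⟩) ω
  -- the dominating function
  set bound : ℝ → ℝ := fun s => C3 * (t - s) ^ (-(1/2 : ℝ)) with hbound
  have hbound_int : Integrable bound (volume.restrict (Set.Ioo 0 t)) := by
    have h1 : IntervalIntegrable (fun x : ℝ => x ^ (-(1/2 : ℝ))) volume 0 t :=
      intervalIntegral.intervalIntegrable_rpow' (by norm_num)
    have h2 := (h1.comp_sub_left t).symm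
    simp only [sub_zero, sub_self] at h2
    rw [intervalIntegrable_iff_integrableOn_Ioo_of_le ht.le] at h2
    exact (h2.const_mul C3)
  -- gaussian integral evaluation and comparison with `bound`
  have halg : ∀ s ∈ Set.Ioo (0:ℝ) t,
      C1 * K * (Real.sqrt (Real.pi / ((t - s) * b)) / 2) = bound s := by
    intro s hs
    have hts : 0 < t - s := by linarith [hs.2]
    have h1 : Real.pi / ((t - s) * b) = Real.pi / b * (t - s)⁻¹ := by
      rw [mul_comm (t - s) b, div_mul_eq_div_div, div_eq_mul_inv (Real.pi / b)]
    have h2 : Real.sqrt (Real.pi / b * (t - s)⁻¹)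
        = Real.sqrt (Real.pi / b) * Real.sqrt (t - s)⁻¹ :=
      Real.sqrt_mul (by positivity) _
    have h3 : (t - s) ^ (-(1/2 : ℝ)) = (Real.sqrt (t - s))⁻¹ := by
      rw [Real.rpow_neg hts.le, Real.sqrt_eq_rpow]
    show C1 * K * (Real.sqrt (Real.pi / ((t - s) * b)) / 2) = C3 * (t - s) ^ (-(1/2 : ℝ))
    rw [h1, h2, Real.sqrt_inv, h3, hC3]
    ring
  -- a.e. measurability of the inner integral
  have hmeas : ∀ R : ℝ, AEStronglyMeasurable
      (fun s => ∫ ω in Set.Ioi R, Real.cos (ω * z) •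
        (exp ((t - s) • ((toCLM A) - ω ^ 2 • (toCLM B))) ((toCLM B) (g s))))
      (volume.restrict (Set.Ioo 0 t)) := by
    intro R
    have key : AEStronglyMeasurable
        (fun p : ℝ × ℝ => Real.cos (p.2 * z) •
          (exp ((t - p.1) • ((toCLM A) - p.2 ^ 2 • (toCLM B))) ((toCLM B) (g p.1))))
        ((volume.restrict (Set.Ioo 0 t)).prod (volume.restrict (Set.Ioi R))) := ?_
    · exact key.integral_prod_right'
    rw [Measure.prod_restrict]
    apply ContinuousOn.aestronglyMeasurable _ (measurableSet_Ioo.prod measurableSet_Ioi)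
    apply ContinuousOn.fun_smul
    · exact (Real.continuous_cos.comp (continuous_snd.mul continuous_const)).continuousOn
    · apply ContinuousOn.clm_apply
      · have h1 : Continuous fun p : ℝ × ℝ =>
            exp ((t - p.1) • ((toCLM A) - p.2 ^ 2 • (toCLM B))) := by
          apply (continuous_iff_continuousAt.2 fun x => (exp_analytic (𝕂 := ℝ) (𝔸 := EuclideanSpace ℝ (Fin N) →L[ℝ] EuclideanSpace ℝ (Fin N)) x).continuousAt).comp
          fun_prop
        exact h1.continuousOn
      · apply (toCLM B).continuous.comp_continuousOn
        apply hg.comp continuousOn_fst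
        intro p hp
        exact le_of_lt hp.1.1
  -- apply dominated convergence
  have hdct := MeasureTheory.tendsto_integral_filter_of_dominated_convergence
    (μ := volume.restrict (Set.Ioo 0 t)) (l := atTop)
    (F := fun R s => ∫ ω in Set.Ioi R, Real.cos (ω * z) •
      (exp ((t - s) • ((toCLM A) - ω ^ 2 • (toCLM B))) ((toCLM B) (g s))))
    (f := fun _ => (0 : EuclideanSpace ℝ (Fin N)))
    bound
    (Eventually.of_forall hmeas)
    (by -- uniform bound
      filter_upwards [eventually_ge_atTop (0:ℝ)] with R hR
      filter_upwards [ae_restrict_mem measurableSet_Ioo] with s hs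
      have hsIcc : s ∈ Set.Icc (0:ℝ) t := ⟨hs.1.le, hs.2.le⟩
      calc ‖∫ ω in Set.Ioi R, Real.cos (ω * z) •
              (exp ((t - s) • ((toCLM A) - ω ^ 2 • (toCLM B))) ((toCLM B) (g s)))‖
          ≤ ∫ ω in Set.Ioi R, C1 * K * Real.exp (-((t - s) * b) * ω ^ 2) :=
            norm_integral_le_of_norm_le (hgauss s hs R)
              (Eventually.of_forall fun ω => hpt s hsIcc ω)
        _ ≤ ∫ ω in Set.Ioi 0, C1 * K * Real.exp (-((t - s) * b) * ω ^ 2) := by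
            apply setIntegral_mono_set (hgauss s hs 0)
            · filter_upwards with ω
              positivity
            · exact HasSubset.Subset.eventuallyLE (Set.Ioi_subset_Ioi hR)
        _ = C1 * K * ∫ ω in Set.Ioi 0, Real.exp (-((t - s) * b) * ω ^ 2) :=
            integral_const_mul _ _
        _ = C1 * K * (Real.sqrt (Real.pi / ((t - s) * b)) / 2) := by
            rw [integral_gaussian_Ioi]
        _ = bound s := halg s hs
        _ ≤ bound s := le_refl _)
    hbound_int
    (by -- pointwise limit
      filter_upwards [ae_restrict_mem measurableSet_Ioo] with s hs
      set h : ℝ → EuclideanSpace ℝ (Fin N) := fun ω => Real.cos (ω * z) •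
        (exp ((t - s) • ((toCLM A) - ω ^ 2 • (toCLM B))) ((toCLM B) (g s))) with hh
      have hint : IntegrableOn h (Set.Ioi 0) := hfint s hs
      have htail : ∀ R : ℝ, 0 ≤ R →
          ∫ ω in Set.Ioi R, h ω = (∫ ω in Set.Ioi 0, h ω) - ∫ ω in (0:ℝ)..R, h ω := by
        intro R hR
        have hsplit : (∫ ω in Set.Ioc 0 R, h ω) + ∫ ω in Set.Ioi R, h ω
            = ∫ ω in Set.Ioi 0, h ω := by
          rw [← setIntegral_union (Set.Ioc_disjoint_Ioi le_rfl) measurableSet_Ioi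
            (hint.mono_set Set.Ioc_subset_Ioi_self)
            (hint.mono_set (Set.Ioi_subset_Ioi hR)), Set.Ioc_union_Ioi_eq_Ioi hR]
        rw [intervalIntegral.integral_of_le hR]
        exact eq_sub_of_add_eq' hsplit
      have h1 : Tendsto (fun R : ℝ => ∫ ω in (0:ℝ)..R, h ω) atTop
          (nhds (∫ ω in Set.Ioi 0, h ω)) :=
        intervalIntegral_tendsto_integral_Ioi 0 hint tendsto_id
      have h2 : Tendsto (fun R : ℝ => (∫ ω in Set.Ioi 0, h ω) - ∫ ω in (0:ℝ)..R, h ω)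
          atTop (nhds 0) := by
        have := tendsto_const_nhds (x := ∫ ω in Set.Ioi 0, h ω) (f := atTop (α := ℝ)) |>.sub h1
        simpa using this
      apply h2.congr'
      filter_upwards [eventually_ge_atTop (0:ℝ)] with R hR
      exact (htail R hR).symm)
  simpa using hdct
end
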